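/- arXiv:2106.00054 — 5 statements merged into one kernel-verified Lean document; each statement's English description precedes it below -/
import Mathlib

section
/- Let $I, J \subset \mathbb{R}$ be intervals and $f : I \to J$ an $L$-bi-Lipschitz homeomorphism with $L \geq 1$. Then for every $\alpha$ with $1 < \alpha \leq L$, $f$ can be written as $f = f_2 \circ f_1$ where $f_1 : I \to \mathbb{R}$ is $\alpha$-bi-Lipschitz and $f_2$ is $(L/\alpha)$-bi-Lipschitz. (One may take $f_1(x) = \int_{x_0}^x |f'(t)|^{\lambda}\,dt$ with $\lambda = \log_L \alpha$.) -/
/-!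
With `p = log_L α`, take `f₁ x = ∫_c^x |f'|^p`. Being Lipschitz, `f` is absolutely continuous,
and bi-Lipschitz forces `|f'| ∈ [L⁻¹, L]` almost everywhere. Then `|f'|^p ∈ [α⁻¹, α]`, so `f₁` is
`α`-bi-Lipschitz, while `|f'| = |f'|^p · |f'|^(1-p)` lies between `α/L · |f'|^p` and
`L/α · |f'|^p`. A continuous injective map of an interval is monotone, so `|f y - f x| = ∫_x^y |f'|`,
and integrating the second comparison shows that `f₂ = f ∘ f₁⁻¹` is `L/α`-bi-Lipschitz.
-/

open Set Filter Topology MeasureTheory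
open scoped Interval

theorem ContinuousOn.strictMonoOn_or_strictAntiOn_of_injOn {α δ : Type*}
    [ConditionallyCompleteLinearOrder α] [TopologicalSpace α] [OrderTopology α] [DenselyOrdered α]
    [LinearOrder δ] [TopologicalSpace δ] [OrderClosedTopology δ]
    {s : Set α} {f : α → δ} (hf : ContinuousOn f s) (hs : s.OrdConnected) (hi : InjOn f s) :
    StrictMonoOn f s ∨ StrictAntiOn f s := by
  rcases s.eq_empty_or_nonempty with rfl | ⟨c, hc⟩
  · exact .inl fun _ h => h.elim
  have : Inhabited s := ⟨⟨c, hc⟩⟩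
  exact (Continuous.strictMono_of_inj hf.domRestrict hi.injective).imp
    strictMono_domRestrict.mp strictAntiOn_iff_strictAnti.mpr

theorem Real.rpow_mem_Icc_inv_rpow {L d r : ℝ} (hL : 0 ≤ L) (hd : d ∈ Icc L⁻¹ L) (hr : 0 ≤ r) :
    d ^ r ∈ Icc (L ^ r)⁻¹ (L ^ r) := by
  rw [← Real.inv_rpow hL]
  exact ⟨Real.rpow_le_rpow (inv_nonneg.2 hL) hd.1 hr,
    Real.rpow_le_rpow ((inv_nonneg.2 hL).trans hd.1) hd.2 hr⟩

theorem Real.mem_Icc_div_rpow_mul_rpow {L d p : ℝ} (hL : 0 < L) (hd : d ∈ Icc L⁻¹ L)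
    (hp : p ≤ 1) : d ∈ Icc ((L / L ^ p)⁻¹ * d ^ p) (L / L ^ p * d ^ p) := by
  have hd0 : 0 ≤ d := (inv_nonneg.2 hL.le).trans hd.1
  have hsplit : d = d ^ (1 - p) * d ^ p := by
    rw [← Real.rpow_add' hd0 (by norm_num), sub_add_cancel, Real.rpow_one]
  have hLp : L / L ^ p = L ^ (1 - p) := by rw [Real.rpow_sub hL, Real.rpow_one]
  obtain ⟨hlower, hupper⟩ := Real.rpow_mem_Icc_inv_rpow hL.le hd (sub_nonneg.2 hp)
  have hdp : 0 ≤ d ^ p := Real.rpow_nonneg hd0 p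
  rw [hLp]
  constructor
  · calc _ ≤ d ^ (1 - p) * d ^ p := mul_le_mul_of_nonneg_right hlower hdp
      _ = d := hsplit.symm
  · calc d = d ^ (1 - p) * d ^ p := hsplit
      _ ≤ _ := mul_le_mul_of_nonneg_right hupper hdp

theorem ae_uIcc_mem_nhds (a b : ℝ) : ∀ᵐ t, t ∈ Ι a b → [[a, b]] ∈ 𝓝 t := by
  filter_upwards [(countable_singleton (max a b)).ae_notMem volume] with t ht hmem
  exact mem_of_superset (Ioo_mem_nhds hmem.1 (lt_of_le_of_ne hmem.2 ht)) Ioo_subset_Icc_self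

theorem integral_mem_Icc_mul_integral_of_ae {g h : ℝ → ℝ} {a b m M : ℝ} (hab : a ≤ b)
    (hg : IntervalIntegrable g volume a b) (hh : IntervalIntegrable h volume a b)
    (hgh : ∀ᵐ t, t ∈ Ioc a b → g t ∈ Icc (m * h t) (M * h t)) :
    ∫ t in a..b, g t ∈ Icc (m * ∫ t in a..b, h t) (M * ∫ t in a..b, h t) := by
  have hgh' := (ae_restrict_iff' measurableSet_Ioc).2 hgh
  rw [← intervalIntegral.integral_const_mul, ← intervalIntegral.integral_const_mul]
  simp only [intervalIntegral.integral_of_le hab]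
  exact ⟨setIntegral_mono_ae_restrict (hh.const_mul m).1 hg.1 (hgh'.mono fun _ => And.left),
    setIntegral_mono_ae_restrict hg.1 (hh.const_mul M).1 (hgh'.mono fun _ => And.right)⟩

theorem integral_abs_deriv_eq_abs_sub {f : ℝ → ℝ} {a b : ℝ} (hab : a ≤ b)
    (hf : AbsolutelyContinuousOnInterval f a b)
    (hmono : MonotoneOn f (Icc a b) ∨ AntitoneOn f (Icc a b)) :
    ∫ t in a..b, |deriv f t| = |f b - f a| := by
  have hnhds := ae_uIcc_mem_nhds a b
  rw [uIcc_of_le hab] at hnhds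
  rcases hmono with hmono | hanti
  · have hderiv : ∀ᵐ t, t ∈ Ι a b → |deriv f t| = deriv f t := by
      filter_upwards [hnhds] with t ht hmem
      rw [← derivWithin_of_mem_nhds (ht hmem)]
      exact abs_of_nonneg hmono.derivWithin_nonneg
    rw [intervalIntegral.integral_congr_ae hderiv, hf.integral_deriv_eq_sub,
      abs_of_nonneg (sub_nonneg.2 (hmono (left_mem_Icc.2 hab) (right_mem_Icc.2 hab) hab))]
  · have hderiv : ∀ᵐ t, t ∈ Ι a b → |deriv f t| = -deriv f t := by
      filter_upwards [hnhds] with t ht hmem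
      rw [← derivWithin_of_mem_nhds (ht hmem)]
      exact abs_of_nonpos hanti.derivWithin_nonpos
    rw [intervalIntegral.integral_congr_ae hderiv, intervalIntegral.integral_neg,
      hf.integral_deriv_eq_sub,
      abs_of_nonpos (sub_nonpos.2 (hanti (left_mem_Icc.2 hab) (right_mem_Icc.2 hab) hab))]

def BiLipschitzOnWith (K : ℝ) (f : ℝ → ℝ) (s : Set ℝ) : Prop :=
  ∀ x ∈ s, ∀ y ∈ s, K⁻¹ * |x - y| ≤ |f x - f y| ∧ |f x - f y| ≤ K * |x - y|

theorem biLipschitzOnWith_of_le {K : ℝ} {f : ℝ → ℝ} {s : Set ℝ}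
    (h : ∀ x ∈ s, ∀ y ∈ s, x ≤ y → K⁻¹ * |x - y| ≤ |f x - f y| ∧ |f x - f y| ≤ K * |x - y|) :
    BiLipschitzOnWith K f s := by
  intro x hx y hy
  rcases le_total x y with hxy | hyx
  · exact h x hx y hy hxy
  · rw [abs_sub_comm x, abs_sub_comm (f x)]
    exact h y hy x hx hyx

theorem apply_invFunOn_apply_eq_of_abs_sub_le {K : ℝ} {f g : ℝ → ℝ} {s : Set ℝ}
    (h : ∀ x ∈ s, ∀ y ∈ s, |f x - f y| ≤ K * |g x - g y|) {x : ℝ} (hx : x ∈ s) :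
    f (Function.invFunOn g s (g x)) = f x := by
  have hex : ∃ y ∈ s, g y = g x := ⟨x, hx, rfl⟩
  have := h _ (Function.invFunOn_mem hex) x hx
  rw [Function.invFunOn_eq hex, sub_self, abs_zero, mul_zero] at this
  exact sub_eq_zero.1 (abs_nonpos_iff.1 this)

theorem biLipschitzOnWith_comp_invFunOn {K : ℝ} {f g : ℝ → ℝ} {s : Set ℝ}
    (h : ∀ x ∈ s, ∀ y ∈ s, |f x - f y| ∈ Icc (K⁻¹ * |g x - g y|) (K * |g x - g y|)) :
    BiLipschitzOnWith K (f ∘ Function.invFunOn g s) (g '' s) := by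
  rintro _ ⟨x, hx, rfl⟩ _ ⟨y, hy, rfl⟩
  have hupper : ∀ x ∈ s, ∀ y ∈ s, |f x - f y| ≤ K * |g x - g y| := fun x hx y hy =>
    (h x hx y hy).2
  rw [Function.comp_apply, Function.comp_apply, apply_invFunOn_apply_eq_of_abs_sub_le hupper hx,
    apply_invFunOn_apply_eq_of_abs_sub_le hupper hy]
  exact h x hx y hy

namespace BiLipschitzOnWith

variable {K : ℝ} {f : ℝ → ℝ} {s : Set ℝ}

theorem lipschitzOnWith (hf : BiLipschitzOnWith K f s) : LipschitzOnWith K.toNNReal f s := by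
  refine LipschitzOnWith.of_dist_le_mul fun x hx y hy => ?_
  rw [Real.dist_eq, Real.dist_eq]
  exact (hf x hx y hy).2.trans (mul_le_mul_of_nonneg_right K.le_coe_toNNReal (abs_nonneg _))

theorem injOn (hf : BiLipschitzOnWith K f s) (hK : 0 < K) : InjOn f s := by
  intro x hx y hy hxy
  have := (hf x hx y hy).1
  rw [hxy, sub_self, abs_zero] at this
  exact sub_eq_zero.1 (abs_nonpos_iff.1 (nonpos_of_mul_nonpos_right this (inv_pos.2 hK)))

theorem monotoneOn_or_antitoneOn (hf : BiLipschitzOnWith K f s) (hK : 0 < K)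
    (hs : s.OrdConnected) : MonotoneOn f s ∨ AntitoneOn f s :=
  (hf.lipschitzOnWith.continuousOn.strictMonoOn_or_strictAntiOn_of_injOn hs
    (hf.injOn hK)).imp StrictMonoOn.monotoneOn StrictAntiOn.antitoneOn

theorem abs_mem_Icc_of_hasDerivAt (hf : BiLipschitzOnWith K f s) {t d : ℝ} (hs : s ∈ 𝓝 t)
    (hd : HasDerivAt f d t) : |d| ∈ Icc K⁻¹ K := by
  have hslope : Tendsto (fun u => |slope f t u|) (𝓝[≠] t) (𝓝 |d|) :=
    (hasDerivAt_iff_tendsto_slope.1 hd).abs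
  refine isClosed_Icc.mem_of_tendsto hslope ?_
  filter_upwards [nhdsWithin_le_nhds hs, self_mem_nhdsWithin] with u hu hne
  have hpos : 0 < |u - t| := abs_pos.2 (sub_ne_zero.2 hne)
  rw [slope_def_field, abs_div, mem_Icc, le_div_iff₀ hpos, div_le_iff₀ hpos]
  exact hf u hu t (mem_of_mem_nhds hs)

theorem ae_abs_deriv_mem_Icc (hf : BiLipschitzOnWith K f s) (hs : s.OrdConnected) {x y : ℝ}
    (hx : x ∈ s) (hy : y ∈ s) : ∀ᵐ t, t ∈ Ι x y → |deriv f t| ∈ Icc K⁻¹ K := by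
  have hsub : [[x, y]] ⊆ s := hs.uIcc_subset hx hy
  have hac : AbsolutelyContinuousOnInterval f x y :=
    (hf.lipschitzOnWith.mono hsub).absolutelyContinuousOnInterval
  filter_upwards [hac.ae_differentiableAt, ae_uIcc_mem_nhds x y] with t hdiff hnhds ht
  exact hf.abs_mem_Icc_of_hasDerivAt (mem_of_superset (hnhds ht) hsub)
    (hdiff (uIoc_subset_uIcc ht)).hasDerivAt

end BiLipschitzOnWith

noncomputable def rpowAbsDerivIntegral (f : ℝ → ℝ) (p c x : ℝ) : ℝ :=
  ∫ t in c..x, |deriv f t| ^ p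

namespace BiLipschitzOnWith

variable {L p c : ℝ} {f : ℝ → ℝ} {s : Set ℝ}

theorem intervalIntegrable_rpow_abs_deriv (hf : BiLipschitzOnWith L f s) (hs : s.OrdConnected)
    (hL : 0 ≤ L) (hp : 0 ≤ p) {x y : ℝ} (hx : x ∈ s) (hy : y ∈ s) :
    IntervalIntegrable (fun t => |deriv f t| ^ p) volume x y := by
  refine (intervalIntegrable_const (c := L ^ p)).mono_fun
    ((measurable_deriv f).abs.pow_const p).aestronglyMeasurable ?_
  refine (ae_restrict_iff' measurableSet_uIoc).2 ?_
  filter_upwards [hf.ae_abs_deriv_mem_Icc hs hx hy] with t ht hmem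
  rw [Real.norm_of_nonneg (Real.rpow_nonneg (abs_nonneg _) p),
    Real.norm_of_nonneg (Real.rpow_nonneg hL p)]
  exact (Real.rpow_mem_Icc_inv_rpow hL (ht hmem) hp).2

theorem abs_sub_rpowAbsDerivIntegral (hf : BiLipschitzOnWith L f s) (hs : s.OrdConnected)
    (hL : 0 ≤ L) (hp : 0 ≤ p) (hc : c ∈ s) {x y : ℝ} (hx : x ∈ s) (hy : y ∈ s) (hxy : x ≤ y) :
    |rpowAbsDerivIntegral f p c x - rpowAbsDerivIntegral f p c y| =
      ∫ t in x..y, |deriv f t| ^ p := by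
  rw [abs_sub_comm, rpowAbsDerivIntegral, rpowAbsDerivIntegral,
    intervalIntegral.integral_interval_sub_left
      (hf.intervalIntegrable_rpow_abs_deriv hs hL hp hc hy)
      (hf.intervalIntegrable_rpow_abs_deriv hs hL hp hc hx)]
  exact abs_of_nonneg (intervalIntegral.integral_nonneg hxy fun t _ =>
    Real.rpow_nonneg (abs_nonneg _) p)

theorem biLipschitzOnWith_rpowAbsDerivIntegral (hf : BiLipschitzOnWith L f s)
    (hs : s.OrdConnected) (hL : 0 ≤ L) (hp : 0 ≤ p) (hc : c ∈ s) :
    BiLipschitzOnWith (L ^ p) (rpowAbsDerivIntegral f p c) s := by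
  refine biLipschitzOnWith_of_le fun x hx y hy hxy => ?_
  have hbounds := integral_mem_Icc_mul_integral_of_ae hxy
    (hf.intervalIntegrable_rpow_abs_deriv hs hL hp hx hy) intervalIntegrable_const
    (m := (L ^ p)⁻¹) (M := L ^ p) (h := fun _ => 1) ?_
  · rwa [hf.abs_sub_rpowAbsDerivIntegral hs hL hp hc hx hy hxy, abs_sub_comm,
      abs_of_nonneg (sub_nonneg.2 hxy), ← integral_one]
  · filter_upwards [hf.ae_abs_deriv_mem_Icc hs hx hy] with t ht hmem
    rw [mul_one, mul_one]
    exact Real.rpow_mem_Icc_inv_rpow hL (ht (by rwa [uIoc_of_le hxy])) hp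

theorem abs_sub_mem_Icc_mul_abs_sub_rpowAbsDerivIntegral (hf : BiLipschitzOnWith L f s)
    (hs : s.OrdConnected) (hL : 0 < L) (hp : p ∈ Icc 0 1) (hc : c ∈ s) (x : ℝ) (hx : x ∈ s)
    (y : ℝ) (hy : y ∈ s) :
    |f x - f y| ∈
      Icc ((L / L ^ p)⁻¹ * |rpowAbsDerivIntegral f p c x - rpowAbsDerivIntegral f p c y|)
        (L / L ^ p * |rpowAbsDerivIntegral f p c x - rpowAbsDerivIntegral f p c y|) := by
  wlog hxy : x ≤ y generalizing x y
  · rw [abs_sub_comm (f x), abs_sub_comm (rpowAbsDerivIntegral f p c x)]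
    exact this y hy x hx (le_of_not_ge hxy)
  have hsub : Icc x y ⊆ s := hs.out hx hy
  have hac : AbsolutelyContinuousOnInterval f x y :=
    (hf.lipschitzOnWith.mono (uIcc_of_le hxy ▸ hsub)).absolutelyContinuousOnInterval
  have hmono := (hf.monotoneOn_or_antitoneOn hL hs).imp (·.mono hsub) (·.mono hsub)
  have hbounds := integral_mem_Icc_mul_integral_of_ae hxy hac.intervalIntegrable_deriv.abs
    (hf.intervalIntegrable_rpow_abs_deriv hs hL.le hp.1 hx hy) (m := (L / L ^ p)⁻¹)
    (M := L / L ^ p) ?_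
  · rwa [hf.abs_sub_rpowAbsDerivIntegral hs hL.le hp.1 hc hx hy hxy, abs_sub_comm,
      ← integral_abs_deriv_eq_abs_sub hxy hac hmono]
  · filter_upwards [hf.ae_abs_deriv_mem_Icc hs hx hy] with t ht hmem
    exact Real.mem_Icc_div_rpow_mul_rpow hL (ht (by rwa [uIoc_of_le hxy])) hp.2

end BiLipschitzOnWith

theorem biLipschitz_interval_decomposition_general
    (I : Set ℝ) (hI : I.OrdConnected)
    (f : ℝ → ℝ) (L : ℝ)
    (hbl : ∀ x ∈ I, ∀ y ∈ I, L⁻¹ * |x - y| ≤ |f x - f y| ∧ |f x - f y| ≤ L * |x - y|) :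
    ∀ α : ℝ, 1 < α → α ≤ L →
      ∃ f₁ f₂ : ℝ → ℝ,
        (∀ x ∈ I, f x = f₂ (f₁ x)) ∧
        (∀ x ∈ I, ∀ y ∈ I,
          α⁻¹ * |x - y| ≤ |f₁ x - f₁ y| ∧ |f₁ x - f₁ y| ≤ α * |x - y|) ∧
        (∀ x ∈ f₁ '' I, ∀ y ∈ f₁ '' I,
          (L / α)⁻¹ * |x - y| ≤ |f₂ x - f₂ y| ∧ |f₂ x - f₂ y| ≤ (L / α) * |x - y|) := by
  intro α hα hαL
  rcases I.eq_empty_or_nonempty with rfl | ⟨c, hc⟩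
  · exact ⟨id, f, by simp, by simp, by simp⟩
  have hL : 1 < L := hα.trans_le hαL
  have hf : BiLipschitzOnWith L f I := hbl
  set p := Real.logb L α
  have hp : p ∈ Icc 0 1 := ⟨(Real.logb_pos hL hα).le,
    Real.logb_self_eq_one hL ▸ Real.logb_le_logb_of_le hL (by positivity) hαL⟩
  have hLp : L ^ p = α := Real.rpow_logb (by positivity) hL.ne' (by positivity)
  have hf₁ := hf.biLipschitzOnWith_rpowAbsDerivIntegral hI (by positivity) hp.1 hc
  have hff₁ := hf.abs_sub_mem_Icc_mul_abs_sub_rpowAbsDerivIntegral hI (by positivity) hp hc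
  rw [hLp] at hf₁ hff₁
  refine ⟨rpowAbsDerivIntegral f p c, f ∘ Function.invFunOn (rpowAbsDerivIntegral f p c) I,
    fun x hx => ?_, hf₁, biLipschitzOnWith_comp_invFunOn hff₁⟩
  exact (apply_invFunOn_apply_eq_of_abs_sub_le (fun x hx y hy => (hff₁ x hx y hy).2) hx).symm

/-- An `L`-bi-Lipschitz homeomorphism between intervals of `ℝ` factors as
`f = f₂ ∘ f₁` with `f₁` `α`-bi-Lipschitz and `f₂` `(L/α)`-bi-Lipschitz, for any `1 < α ≤ L`. -/
theorem biLipschitz_interval_decomposition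
    (I J : Set ℝ) (hI : I.OrdConnected) (hJ : J.OrdConnected)
    (f : ℝ → ℝ) (L : ℝ) (hL : 1 ≤ L)
    (hbij : Set.BijOn f I J)
    (hbl : ∀ x ∈ I, ∀ y ∈ I, L⁻¹ * |x - y| ≤ |f x - f y| ∧ |f x - f y| ≤ L * |x - y|) :
    ∀ α : ℝ, 1 < α → α ≤ L →
      ∃ f₁ f₂ : ℝ → ℝ,
        (∀ x ∈ I, f x = f₂ (f₁ x)) ∧
        (∀ x ∈ I, ∀ y ∈ I,
          α⁻¹ * |x - y| ≤ |f₁ x - f₁ y| ∧ |f₁ x - f₁ y| ≤ α * |x - y|) ∧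
        (∀ x ∈ f₁ '' I, ∀ y ∈ f₁ '' I,
          (L / α)⁻¹ * |x - y| ≤ |f₂ x - f₂ y| ∧ |f₂ x - f₂ y| ≤ (L / α) * |x - y|) :=
  biLipschitz_interval_decomposition_general I hI f L hbl
end

section
/- Let $E \subset \mathbb{R}^N$ be a bounded set and let $K = \operatorname{Hull}(E)$ be its closed convex hull. If $x, y \in K$ satisfy $|x - y| = \operatorname{diam}(K)$, then $x, y \in \overline{E}$. -/
/-!
Put `u = x - y`, `r = ‖u‖ = diam K`. Every `z ∈ E` lies in the closed ball of radius `r` about `y`,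
and there `‖z - x‖² ≤ 2 ⟪u, x - z⟫`: points of `E` on which the linear functional `⟪·, u⟫`
nearly attains its value at `x` are close to `x`. Since `x ∈ K` and a convex function on the
convex hull is dominated by its values on `E`, such points exist.
-/

open Set Metric RealInnerProductSpace

theorem exists_lt_of_mem_closure_convexHull {F : Type*} [AddCommGroup F] [Module ℝ F]
    [TopologicalSpace F] {E : Set F} {f : F → ℝ} {x : F} {c : ℝ}
    (hf : ConvexOn ℝ univ f) (hfx : ContinuousAt f x) (hx : x ∈ closure (convexHull ℝ E))
    (hc : c < f x) : ∃ z ∈ E, c < f z := by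
  obtain ⟨p, hcp, hp⟩ := mem_closure_iff_nhds.1 hx _ (hfx.eventually (lt_mem_nhds hc))
  obtain ⟨z, hz, hpz⟩ := hf.exists_ge_of_mem_convexHull (subset_univ E) hp
  exact ⟨z, hz, hcp.trans_le hpz⟩

theorem norm_sub_sq_le_two_inner_of_norm_sub_le {F : Type*} [NormedAddCommGroup F]
    [InnerProductSpace ℝ F] {x y z : F} (hz : ‖z - y‖ ≤ ‖x - y‖) :
    ‖z - x‖ ^ 2 ≤ 2 * ⟪x - y, x - z⟫ := by
  have hzy : ‖z - y‖ ^ 2 ≤ ‖x - y‖ ^ 2 := pow_le_pow_left₀ (norm_nonneg _) hz 2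
  have hsplit : x - z = (x - y) - (z - y) := by abel
  calc ‖z - x‖ ^ 2 = ‖(z - y) - (x - y)‖ ^ 2 := by rw [sub_sub_sub_cancel_right]
    _ = ‖z - y‖ ^ 2 - 2 * ⟪z - y, x - y⟫ + ‖x - y‖ ^ 2 := norm_sub_sq_real _ _
    _ ≤ 2 * (‖x - y‖ ^ 2 - ⟪z - y, x - y⟫) := by linarith
    _ = 2 * ⟪x - y, x - z⟫ := by
      rw [hsplit, inner_sub_right (x - y), real_inner_self_eq_norm_sq, real_inner_comm]

theorem mem_closure_of_dist_eq_diam_closure_convexHull {F : Type*} [NormedAddCommGroup F]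
    [InnerProductSpace ℝ F] {E : Set F} (hE : Bornology.IsBounded E) {x y : F}
    (hx : x ∈ closure (convexHull ℝ E)) (hy : y ∈ closure (convexHull ℝ E))
    (hxy : dist x y = diam (closure (convexHull ℝ E))) :
    x ∈ closure E := by
  have hK : Bornology.IsBounded (closure (convexHull ℝ E)) :=
    (isBounded_convexHull.2 hE).closure
  have hE_ball : ∀ z ∈ E, ‖z - y‖ ≤ ‖x - y‖ := fun z hz => by
    rw [← dist_eq_norm, ← dist_eq_norm, hxy]
    exact dist_le_diam_of_mem hK (subset_closure (subset_convexHull ℝ E hz)) hy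
  rw [Metric.mem_closure_iff]
  intro ε hε
  obtain ⟨z, hz, hlt⟩ := exists_lt_of_mem_closure_convexHull
    ((innerSL ℝ (x - y)).toLinearMap.convexOn convex_univ)
    (innerSL ℝ (x - y)).continuous.continuousAt hx
    (sub_lt_self ((innerSL ℝ (x - y)) x) (by positivity : 0 < ε ^ 2 / 2))
  refine ⟨z, hz, ?_⟩
  have hclose : ‖z - x‖ ^ 2 < ε ^ 2 := by
    have hbound := norm_sub_sq_le_two_inner_of_norm_sub_le (hE_ball z hz)
    simp only [ContinuousLinearMap.coe_coe, innerSL_apply_apply] at hlt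
    rw [inner_sub_right] at hbound
    linarith
  rw [dist_comm, dist_eq_norm]
  exact lt_of_pow_lt_pow_left₀ 2 hε.le hclose

/-- If `x, y` lie in the closed convex hull `K` of a bounded set
`E ⊂ ℝ^N` and `|x - y| = diam K`, then `x, y ∈ closure E`. -/
theorem diameter_extremes_mem_closure (N : ℕ)
    (E : Set (EuclideanSpace ℝ (Fin N))) (hE : Bornology.IsBounded E)
    (x y : EuclideanSpace ℝ (Fin N))
    (hx : x ∈ closure (convexHull ℝ E)) (hy : y ∈ closure (convexHull ℝ E))
    (hxy : dist x y = Metric.diam (closure (convexHull ℝ E))) :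
    x ∈ closure E ∧ y ∈ closure E :=
  ⟨mem_closure_of_dist_eq_diam_closure_convexHull hE hx hy hxy,
    mem_closure_of_dist_eq_diam_closure_convexHull hE hy hx (by rwa [dist_comm])⟩
end

section
/- Let $E_1, \ldots, E_n$ be subsets of $\mathbb{R}^N$. There exist $l \in \{1, \ldots, n\}$ and pairwise disjoint closed convex sets $\Delta_1, \ldots, \Delta_l \subset \mathbb{R}^N$ such that each $E_i$ is contained in some $\Delta_j$ and $\sum_{j=1}^{l} \operatorname{diam}(\Delta_j) \leq \sum_{i=1}^{n} \operatorname{diam}(E_i)$. -/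
/-!
Replace every set by its closed convex hull, which has the same diameter. As long as two of the
current closed convex sets meet, replace both by the closed convex hull of their union: its
diameter is that of the union, which is at most the sum of the two diameters because they share a
point. Each such step lowers the number of sets and does not increase the total diameter, so the
process stops at a pairwise disjoint family.
-/

open Set Finset Metric

theorem sum_insert_le_add {ι M : Type*} [DecidableEq ι] [AddCommMonoid M] [PartialOrder M]
    [CanonicallyOrderedAdd M] (s : Finset ι) (a : ι) (f : ι → M) :
    ∑ i ∈ insert a s, f i ≤ f a + ∑ i ∈ s, f i := by
  by_cases ha : a ∈ s
  · rw [Finset.insert_eq_of_mem ha]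
    exact le_add_self
  · rw [sum_insert ha]

section Coarsening

variable {X : Type*} [PseudoEMetricSpace X]

structure IsCoarsening (S T : Finset (Set X)) : Prop where
  exists_superset : ∀ A ∈ S, ∃ B ∈ T, A ⊆ B
  card_le : #T ≤ #S
  sum_ediam_le : ∑ B ∈ T, ediam B ≤ ∑ A ∈ S, ediam A

theorem IsCoarsening.refl (S : Finset (Set X)) : IsCoarsening S S :=
  ⟨fun A hA => ⟨A, hA, subset_rfl⟩, le_rfl, le_rfl⟩

theorem IsCoarsening.trans {S T U : Finset (Set X)} (hST : IsCoarsening S T)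
    (hTU : IsCoarsening T U) : IsCoarsening S U where
  exists_superset A hA := by
    obtain ⟨B, hB, hAB⟩ := hST.exists_superset A hA
    obtain ⟨C, hC, hBC⟩ := hTU.exists_superset B hB
    exact ⟨C, hC, hAB.trans hBC⟩
  card_le := hTU.card_le.trans hST.card_le
  sum_ediam_le := hTU.sum_ediam_le.trans hST.sum_ediam_le

end Coarsening

variable {X : Type*} [SeminormedAddCommGroup X] [NormedSpace ℝ X]

theorem ediam_closedConvexHull (s : Set X) : ediam (closedConvexHull ℝ s) = ediam s := by
  rw [closedConvexHull_eq_closure_convexHull, ediam_closure, convexHull_ediam]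

theorem ediam_closedConvexHull_union_le {s t : Set X} (h : (s ∩ t).Nonempty) :
    ediam (closedConvexHull ℝ (s ∪ t)) ≤ ediam s + ediam t :=
  (ediam_closedConvexHull _).trans_le (ediam_union_le h)

theorem isCoarsening_image_closedConvexHull (S : Finset (Set X)) :
    IsCoarsening S (S.image (closedConvexHull ℝ)) where
  exists_superset A hA := ⟨_, mem_image_of_mem _ hA, subset_closedConvexHull⟩
  card_le := card_image_le
  sum_ediam_le := by
    simpa only [ediam_closedConvexHull] using
      sum_image_le_of_nonneg (s := S) (g := closedConvexHull ℝ) (f := ediam) fun _ _ => zero_le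

theorem isCoarsening_merge {S : Finset (Set X)} {A B : Set X} (hA : A ∈ S) (hB : B ∈ S)
    (hAB : A ≠ B) (hmeet : (A ∩ B).Nonempty) :
    IsCoarsening S (insert (closedConvexHull ℝ (A ∪ B)) ((S.erase A).erase B)) ∧
      #(insert (closedConvexHull ℝ (A ∪ B)) ((S.erase A).erase B)) < #S := by
  have hB' : B ∈ S.erase A := mem_erase.2 ⟨hAB.symm, hB⟩
  have hcard : #((S.erase A).erase B) + 2 = #S := by
    rw [← card_erase_add_one hA, ← card_erase_add_one hB']
  have hsum : ∑ C ∈ S, ediam C = ediam A + (ediam B + ∑ C ∈ (S.erase A).erase B, ediam C) := by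
    rw [← add_sum_erase _ _ hA, ← add_sum_erase _ _ hB']
  refine ⟨⟨fun C hC => ?_, ?_, ?_⟩, (card_insert_le _ _).trans_lt (by omega)⟩
  · by_cases hCAB : C = A ∨ C = B
    · refine ⟨_, mem_insert_self _ _, ?_⟩
      rcases hCAB with rfl | rfl
      exacts [subset_union_left.trans subset_closedConvexHull,
        subset_union_right.trans subset_closedConvexHull]
    · push Not at hCAB
      exact ⟨C, mem_insert_of_mem (mem_erase.2 ⟨hCAB.2, mem_erase.2 ⟨hCAB.1, hC⟩⟩), subset_rfl⟩
  · exact (card_insert_le _ _).trans (by omega)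
  · calc ∑ C ∈ insert (closedConvexHull ℝ (A ∪ B)) ((S.erase A).erase B), ediam C
        ≤ ediam (closedConvexHull ℝ (A ∪ B)) + ∑ C ∈ (S.erase A).erase B, ediam C :=
          sum_insert_le_add _ _ _
      _ ≤ ediam A + ediam B + ∑ C ∈ (S.erase A).erase B, ediam C := by
          gcongr; exact ediam_closedConvexHull_union_le hmeet
      _ = ∑ C ∈ S, ediam C := by rw [hsum, add_assoc]

theorem exists_isCoarsening_pairwiseDisjoint_of_closed_convex (S : Finset (Set X))
    (hS : ∀ A ∈ S, IsClosed A ∧ Convex ℝ A) :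
    ∃ D, IsCoarsening S D ∧ (∀ B ∈ D, IsClosed B ∧ Convex ℝ B) ∧
      (D : Set (Set X)).PairwiseDisjoint id := by
  induction hn : #S using Nat.strong_induction_on generalizing S with
  | _ n ih =>
  by_cases hdisj : (S : Set (Set X)).PairwiseDisjoint id
  · exact ⟨S, .refl S, hS, hdisj⟩
  obtain ⟨A, hA, B, hB, hAB, hmeet⟩ : ∃ A ∈ S, ∃ B ∈ S, A ≠ B ∧ (A ∩ B).Nonempty := by
    simpa [Set.PairwiseDisjoint, Set.Pairwise, Set.not_disjoint_iff_nonempty_inter] using hdisj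
  obtain ⟨hcoarse, hlt⟩ := isCoarsening_merge hA hB hAB hmeet
  have hclosedConvex : ∀ C ∈ insert (closedConvexHull ℝ (A ∪ B)) ((S.erase A).erase B),
      IsClosed C ∧ Convex ℝ C := by
    simp only [Finset.forall_mem_insert]
    exact ⟨⟨isClosed_closedConvexHull, convex_closedConvexHull⟩,
      fun C hC => hS C (mem_of_mem_erase (mem_of_mem_erase hC))⟩
  obtain ⟨D, hSD, hD⟩ := ih _ (hn ▸ hlt) _ hclosedConvex rfl
  exact ⟨D, hcoarse.trans hSD, hD⟩

theorem exists_isCoarsening_pairwiseDisjoint (S : Finset (Set X)) :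
    ∃ D, IsCoarsening S D ∧ (∀ B ∈ D, IsClosed B ∧ Convex ℝ B) ∧
      (D : Set (Set X)).PairwiseDisjoint id := by
  obtain ⟨D, hSD, hD⟩ := exists_isCoarsening_pairwiseDisjoint_of_closed_convex
    (S.image (closedConvexHull ℝ)) (by simp [isClosed_closedConvexHull, convex_closedConvexHull])
  exact ⟨D, (isCoarsening_image_closedConvexHull S).trans hSD, hD⟩

/-- Given sets `E₁, …, Eₙ ⊂ ℝ^N`, there are `l ∈ {1,…,n}` and pairwise
disjoint closed convex sets `Δ₁, …, Δ_l` such that each `Eᵢ` is contained in some `Δⱼ` and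
`∑ diam Δⱼ ≤ ∑ diam Eᵢ` (diameters in `[0,∞]`). -/
theorem convex_disjointification (N n : ℕ) (hn : 1 ≤ n)
    (E : Fin n → Set (EuclideanSpace ℝ (Fin N))) :
    ∃ l : ℕ, 1 ≤ l ∧ l ≤ n ∧
      ∃ Δ : Fin l → Set (EuclideanSpace ℝ (Fin N)),
        (∀ j, IsClosed (Δ j) ∧ Convex ℝ (Δ j)) ∧
        (∀ j j', j ≠ j' → Disjoint (Δ j) (Δ j')) ∧
        (∀ i, ∃ j, E i ⊆ Δ j) ∧
        ∑ j, EMetric.diam (Δ j) ≤ ∑ i, EMetric.diam (E i) := by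
  obtain ⟨D, hED, hclosedConvex, hdisj⟩ := exists_isCoarsening_pairwiseDisjoint (univ.image E)
  have hcover (i : Fin n) : ∃ B ∈ D, E i ⊆ B :=
    hED.exists_superset _ (mem_image_of_mem _ (mem_univ i))
  let e := D.equivFin
  refine ⟨#D, card_pos.2 ?_, hED.card_le.trans (card_image_le.trans (card_fin n).le),
    fun j => e.symm j, fun j => hclosedConvex _ (e.symm j).2, fun j j' hjj' => ?_,
    fun i => ?_, ?_⟩
  · obtain ⟨B, hB, -⟩ := hcover ⟨0, hn⟩
    exact ⟨B, hB⟩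
  · exact hdisj (e.symm j).2 (e.symm j').2 (Subtype.coe_injective.ne (e.symm.injective.ne hjj'))
  · obtain ⟨B, hB, hEB⟩ := hcover i
    exact ⟨e ⟨B, hB⟩, by simpa using hEB⟩
  · calc ∑ j, ediam (e.symm j : Set (EuclideanSpace ℝ (Fin N))) = ∑ B ∈ D, ediam B :=
          (e.symm.sum_comp fun B => ediam B.1).trans (sum_coe_sort D ediam)
      _ ≤ ∑ A ∈ univ.image E, ediam A := hED.sum_ediam_le
      _ ≤ ∑ i, ediam (E i) := sum_image_le_of_nonneg fun _ _ => zero_le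
end

section
/- Let $X$ be a totally bounded metric space, $\delta > 0$, and suppose there is a family of nonempty subsets $\{X_w\}$ of $X$ indexed by a subtree $\mathcal{W}$ of finite binary words such that: $X_\varepsilon = X$; children are subsets of parents; each non-singleton $X_w$ splits as a disjoint union $X_w = X_{w1} \cup X_{w2}$ with $\operatorname{dist}(X_{w1}, X_{w2}) \geq \delta \max\{\operatorname{diam}(X_{w1}), \operatorname{diam}(X_{w2})\}$; and singletons $X_w$ have the unique child $X_{w1} = X_w$. Then $X$ is $c$-uniformly disconnected with $c = 1 + 2\delta^{-1}$: for every $x \in X$ and $0 < r < \operatorname{diam}(X)$ there is a set $E \subset X$ containing $x$ with $\operatorname{diam}(E) \leq r$ and $\operatorname{dist}(E, X \setminus E) \geq r/c$. -/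
/-!
Follow the branch of the tree through `x` and stop at the first node whose piece has diameter
at most `r`; that piece is `E`. The branch does reach such a node: otherwise every sibling along
it stays at distance `≥ δ r` from everything further down, and picking one point in each sibling
gives an infinite `δ r`-separated sequence, impossible in a totally bounded space. A point `z`
outside `E` leaves the branch at some node `X_u` of diameter `> r`, i.e. `z` lies in the sibling
of the child containing `E`. Splitting `diam X_u ≤ diam X_{u1} + dist y z + diam X_{u2}` and
bounding both diameters by `dist y z / δ` gives `r < (1 + 2/δ) dist y z`.
-/

open Set Metric

section

variable {α : Type*}

section Branch

variable {Xf : List Bool → Set α} {x : α}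

open Classical in
noncomputable def branchStep (Xf : List Bool → Set α) (x : α) (w : List Bool) : List Bool :=
  if (Xf w).Subsingleton then w else w ++ [decide (x ∈ Xf (w ++ [true]))]

noncomputable def branch (Xf : List Bool → Set α) (x : α) (n : ℕ) : List Bool :=
  (branchStep Xf x)^[n] []

theorem branch_succ (n : ℕ) : branch Xf x (n + 1) = branchStep Xf x (branch Xf x n) :=
  Function.iterate_succ_apply' _ _ _

end Branch

variable [PseudoMetricSpace α]

theorem TotallyBounded.exists_lt_dist_lt {s : Set α} (hs : TotallyBounded s) {ε : ℝ}
    (hε : 0 < ε) {y : ℕ → α} (hy : ∀ n, y n ∈ s) : ∃ n m, n < m ∧ dist (y n) (y m) < ε := by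
  obtain ⟨t, htfin, hcover⟩ := totallyBounded_iff.mp hs (ε / 2) (half_pos hε)
  have hcenter : ∀ n, ∃ q ∈ t, dist (y n) q < ε / 2 := fun n => by
    simpa only [mem_iUnion, mem_ball, exists_prop] using hcover (hy n)
  choose q hqt hq using hcenter
  obtain ⟨n, m, hnm, hqnm⟩ := htfin.exists_lt_map_eq_of_forall_mem hqt
  refine ⟨n, m, hnm, ?_⟩
  calc dist (y n) (y m) ≤ dist (y n) (q n) + dist (y m) (q m) := by
        rw [hqnm]; exact dist_triangle_right _ _ _
    _ < ε / 2 + ε / 2 := add_lt_add (hq n) (hq m)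
    _ = ε := add_halves ε

def DiamSeparated (δ : ℝ) (T F : Set α) : Prop :=
  ∀ a ∈ T, ∀ b ∈ F, δ * max (diam T) (diam F) ≤ dist a b

namespace DiamSeparated

variable {δ r : ℝ} {T F : Set α} {y z : α}

theorem symm (h : DiamSeparated δ T F) : DiamSeparated δ F T := fun a ha b hb => by
  rw [max_comm, dist_comm]
  exact h b hb a ha

theorem div_le_dist (hδ : 0 < δ) (h : DiamSeparated δ T F) (hr : r < diam (T ∪ F))
    (hy : y ∈ T) (hz : z ∈ F) : r / (1 + 2 / δ) ≤ dist y z := by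
  have hT : δ * diam T ≤ dist y z :=
    (mul_le_mul_of_nonneg_left (le_max_left _ _) hδ.le).trans (h y hy z hz)
  have hF : δ * diam F ≤ dist y z :=
    (mul_le_mul_of_nonneg_left (le_max_right _ _) hδ.le).trans (h y hy z hz)
  have hrδ : δ * r < δ * (diam T + dist y z + diam F) :=
    mul_lt_mul_of_pos_left (hr.trans_le (diam_union hy hz)) hδ
  have hexpand : δ * (dist y z * (1 + 2 / δ)) = δ * dist y z + 2 * dist y z := by
    field_simp
  rw [div_le_iff₀ (by positivity)]
  refine le_of_mul_le_mul_left ?_ hδ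
  linarith

end DiamSeparated

section Nested

variable {δ r : ℝ} {S : ℕ → Set α}

theorem exists_diam_le_of_forall_split (htb : TotallyBounded (univ : Set α)) (hδ : 0 < δ)
    (hr : 0 < r) (hS : Antitone S)
    (hsplit : ∀ n, r < diam (S n) →
      ∃ F, F.Nonempty ∧ S n = S (n + 1) ∪ F ∧ DiamSeparated δ (S (n + 1)) F) :
    ∃ N, diam (S N) ≤ r := by
  by_contra! hlarge
  choose F hFne hunion hsep using fun n => hsplit n (hlarge n)
  choose y hy using hFne
  have hfar : ∀ n m, n < m → δ * r ≤ dist (y n) (y m) := fun n m hnm => by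
    have hym : y m ∈ S (n + 1) := hS hnm (hunion m ▸ subset_union_right (hy m))
    rw [dist_comm]
    calc δ * r ≤ δ * max (diam (S (n + 1))) (diam (F n)) :=
          mul_le_mul_of_nonneg_left ((hlarge _).le.trans (le_max_left _ _)) hδ.le
      _ ≤ dist (y m) (y n) := hsep n (y m) hym (y n) (hy n)
  obtain ⟨n, m, hnm, hclose⟩ :=
    htb.exists_lt_dist_lt (mul_pos hδ hr) (fun n => mem_univ (y n))
  exact (hfar n m hnm).not_gt hclose

theorem div_le_dist_of_forall_lt_diam (hδ : 0 < δ) (hS : Antitone S)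
    (hsplit : ∀ n, r < diam (S n) → ∃ F, S n = S (n + 1) ∪ F ∧ DiamSeparated δ (S (n + 1)) F)
    {N : ℕ} (hN : ∀ k < N, r < diam (S k)) {y z : α} (hy : y ∈ S N) (hz0 : z ∈ S 0)
    (hz : z ∉ S N) : r / (1 + 2 / δ) ≤ dist y z := by
  obtain ⟨k, hk, hzk, hzk'⟩ : ∃ k < N, z ∈ S k ∧ z ∉ S (k + 1) := by
    by_contra! hstay
    have hmem : ∀ k ≤ N, z ∈ S k := fun k => by
      induction k with
      | zero => exact fun _ => hz0
      | succ k ih => exact fun hk => hstay k hk (ih (by omega))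
    exact hz (hmem N le_rfl)
  obtain ⟨F, hunion, hsep⟩ := hsplit k (hN k hk)
  have hzF : z ∈ F := ((hunion ▸ hzk : z ∈ S (k + 1) ∪ F)).resolve_left hzk'
  exact hsep.div_le_dist hδ (hunion ▸ hN k hk) (hS hk hy) hzF

end Nested

section Tree

variable {δ : ℝ} {W : Set (List Bool)} {Xf : List Bool → Set α} {w : List Bool} {x : α}

def IsSeparatedTree (δ : ℝ) (W : Set (List Bool)) (Xf : List Bool → Set α) : Prop :=
  ∀ w ∈ W, ¬ (Xf w).Subsingleton → w ++ [true] ∈ W ∧ w ++ [false] ∈ W ∧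
    Xf w = Xf (w ++ [true]) ∪ Xf (w ++ [false]) ∧
    DiamSeparated δ (Xf (w ++ [true])) (Xf (w ++ [false]))

theorem IsSeparatedTree.child (hT : IsSeparatedTree δ W Xf) (hw : w ∈ W)
    (hs : ¬ (Xf w).Subsingleton) (i : Bool) :
    w ++ [i] ∈ W ∧ w ++ [!i] ∈ W ∧ Xf w = Xf (w ++ [i]) ∪ Xf (w ++ [!i]) ∧
      DiamSeparated δ (Xf (w ++ [i])) (Xf (w ++ [!i])) := by
  obtain ⟨ht, hf, hunion, hsep⟩ := hT w hw hs
  cases i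
  · exact ⟨hf, ht, hunion.trans (union_comm _ _), hsep.symm⟩
  · exact ⟨ht, hf, hunion, hsep⟩

theorem IsSeparatedTree.mem_branchStep (hT : IsSeparatedTree δ W Xf) (hw : w ∈ W)
    (hx : x ∈ Xf w) : branchStep Xf x w ∈ W ∧ x ∈ Xf (branchStep Xf x w) := by
  classical
  by_cases hs : (Xf w).Subsingleton
  · rw [branchStep, if_pos hs]
    exact ⟨hw, hx⟩
  obtain ⟨ht, hf, hunion, -⟩ := hT w hw hs
  by_cases hxt : x ∈ Xf (w ++ [true])
  · rw [branchStep, if_neg hs, decide_eq_true hxt]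
    exact ⟨ht, hxt⟩
  · rw [branchStep, if_neg hs, decide_eq_false hxt]
    rw [hunion] at hx
    exact ⟨hf, hx.resolve_left hxt⟩

theorem IsSeparatedTree.branch_mem (hT : IsSeparatedTree δ W Xf) (hroot : [] ∈ W)
    (hx : x ∈ Xf []) (n : ℕ) : branch Xf x n ∈ W ∧ x ∈ Xf (branch Xf x n) := by
  induction n with
  | zero => exact ⟨hroot, hx⟩
  | succ n ih => rw [branch_succ]; exact hT.mem_branchStep ih.1 ih.2

theorem IsSeparatedTree.exists_split_branch (hT : IsSeparatedTree δ W Xf)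
    (hne : ∀ w ∈ W, (Xf w).Nonempty) (hroot : [] ∈ W) (hx : x ∈ Xf []) (n : ℕ)
    (hs : ¬ (Xf (branch Xf x n)).Subsingleton) :
    ∃ F, F.Nonempty ∧ Xf (branch Xf x n) = Xf (branch Xf x (n + 1)) ∪ F ∧
      DiamSeparated δ (Xf (branch Xf x (n + 1))) F := by
  classical
  obtain ⟨-, hsib, hunion, hsep⟩ :=
    hT.child (hT.branch_mem hroot hx n).1 hs (decide (x ∈ Xf (branch Xf x n ++ [true])))
  rw [branch_succ, branchStep, if_neg hs]
  exact ⟨_, hne _ hsib, hunion, hsep⟩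

theorem IsSeparatedTree.antitone_branch (hT : IsSeparatedTree δ W Xf) (hroot : [] ∈ W)
    (hx : x ∈ Xf []) : Antitone fun n => Xf (branch Xf x n) := by
  classical
  refine antitone_nat_of_succ_le fun n => ?_
  rw [branch_succ, branchStep]
  split_ifs with hs
  · exact subset_rfl
  · obtain ⟨-, -, hunion, -⟩ :=
      hT.child (hT.branch_mem hroot hx n).1 hs (decide (x ∈ Xf (branch Xf x n ++ [true])))
    exact hunion ▸ subset_union_left

end Tree

end

theorem uniformlyDisconnected_of_tree_general {α : Type*} [MetricSpace α]
    (htb : TotallyBounded (univ : Set α))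
    (δ : ℝ) (hδ : 0 < δ)
    (W : Set (List Bool)) (Xf : List Bool → Set α)
    (hroot : [] ∈ W) (hXroot : Xf [] = univ)
    (hne : ∀ w ∈ W, (Xf w).Nonempty)
    (hsplit : ∀ w ∈ W, ¬ (Xf w).Subsingleton →
      w ++ [true] ∈ W ∧ w ++ [false] ∈ W ∧
      Xf w = Xf (w ++ [true]) ∪ Xf (w ++ [false]) ∧
      Disjoint (Xf (w ++ [true])) (Xf (w ++ [false])) ∧
      ∀ x ∈ Xf (w ++ [true]), ∀ y ∈ Xf (w ++ [false]),
        δ * max (Metric.diam (Xf (w ++ [true]))) (Metric.diam (Xf (w ++ [false]))) ≤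
          dist x y) :
    ∀ x : α, ∀ r : ℝ, 0 < r → r < Metric.diam (univ : Set α) →
      ∃ E : Set α, x ∈ E ∧ Metric.diam E ≤ r ∧
        ∀ y ∈ E, ∀ z ∈ Eᶜ, r / (1 + 2 / δ) ≤ dist y z := by
  classical
  intro x r hr _
  have hT : IsSeparatedTree δ W Xf := fun w hw hs =>
    let ⟨ht, hf, hunion, _, hsep⟩ := hsplit w hw hs
    ⟨ht, hf, hunion, hsep⟩
  have hx : x ∈ Xf [] := hXroot ▸ mem_univ x
  set S : ℕ → Set α := fun n => Xf (branch Xf x n)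
  have hS : Antitone S := hT.antitone_branch hroot hx
  have hcut : ∀ n, r < diam (S n) →
      ∃ F, F.Nonempty ∧ S n = S (n + 1) ∪ F ∧ DiamSeparated δ (S (n + 1)) F := fun n hn =>
    hT.exists_split_branch hne hroot hx n fun hs => (hr.trans hn).ne' (diam_subsingleton hs)
  have hfirst : ∃ N, diam (S N) ≤ r := exists_diam_le_of_forall_split htb hδ hr hS hcut
  refine ⟨S (Nat.find hfirst), (hT.branch_mem hroot hx _).2, Nat.find_spec hfirst,
    fun y hy z hz => ?_⟩
  exact div_le_dist_of_forall_lt_diam hδ hS (fun n hn => (hcut n hn).imp fun _ h => h.2)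
    (fun k hk => lt_of_not_ge (Nat.find_min hfirst hk)) hy (hXroot.symm ▸ mem_univ z : z ∈ Xf [])
    hz

/-- A totally bounded metric space admitting a binary tree decomposition
`{X_w}` with relative separation `δ` between siblings is `c`-uniformly disconnected with
`c = 1 + 2/δ`.  Words are lists over `Bool` (`w ++ [true]` is the child `w1`,
`w ++ [false]` the child `w2`). -/
theorem uniformlyDisconnected_of_tree {α : Type*} [MetricSpace α]
    (htb : TotallyBounded (univ : Set α))
    (δ : ℝ) (hδ : 0 < δ)
    (W : Set (List Bool)) (Xf : List Bool → Set α)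
    (hprefix : ∀ (w : List Bool) (i : Bool), w ++ [i] ∈ W → w ∈ W)
    (hroot : [] ∈ W) (hXroot : Xf [] = univ)
    (hne : ∀ w ∈ W, (Xf w).Nonempty)
    (hsub : ∀ w ∈ W, ∀ i : Bool, w ++ [i] ∈ W → Xf (w ++ [i]) ⊆ Xf w)
    (hsplit : ∀ w ∈ W, ¬ (Xf w).Subsingleton →
      w ++ [true] ∈ W ∧ w ++ [false] ∈ W ∧
      Xf w = Xf (w ++ [true]) ∪ Xf (w ++ [false]) ∧
      Disjoint (Xf (w ++ [true])) (Xf (w ++ [false])) ∧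
      ∀ x ∈ Xf (w ++ [true]), ∀ y ∈ Xf (w ++ [false]),
        δ * max (Metric.diam (Xf (w ++ [true]))) (Metric.diam (Xf (w ++ [false]))) ≤
          dist x y)
    (hsingle : ∀ w ∈ W, (Xf w).Subsingleton →
      w ++ [true] ∈ W ∧ w ++ [false] ∉ W ∧ Xf (w ++ [true]) = Xf w) :
    ∀ x : α, ∀ r : ℝ, 0 < r → r < Metric.diam (univ : Set α) →
      ∃ E : Set α, x ∈ E ∧ Metric.diam E ≤ r ∧
        ∀ y ∈ E, ∀ z ∈ Eᶜ, r / (1 + 2 / δ) ≤ dist y z :=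
  uniformlyDisconnected_of_tree_general htb δ hδ W Xf hroot hXroot hne hsplit
end

section
/- Let $X$ be a $c$-uniformly disconnected metric space ($c \geq 1$). Then there is a family of subsets $\{X_w\}_{w \in \mathcal{W}}$ indexed by a prefix-closed set $\mathcal{W} \subset \{1,2\}^*$ of binary words with $X_\varepsilon = X$, such that: each non-singleton $X_w$ decomposes as $X_w = X_{w1} \sqcup X_{w2}$ with $\operatorname{diam}(X_{w1}) \leq \tfrac12 \operatorname{diam}(X_w)$ and $\operatorname{dist}(X_{w1}, X_{w2}) \geq (2c)^{-1} \max\{\operatorname{diam}(X_{w1}), \operatorname{diam}(X_{w2})\}$; and each singleton $X_w$ has the single child $X_{w1} = X_w$. -/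
/-!
In a bounded space, a node `S` with at least two points is split with the set `E` that uniform
disconnectedness isolates around a point of `S` at scale `r = diam S / 2`: `S ∩ E` has diameter at
most `r`, `S \ E` is nonempty because `diam S > r`, and the two parts are at distance at least
`r / c = (2c)⁻¹ diam S`, which dominates both of their diameters. Iterating such splits, with a
singleton as its own only child, produces the tree.

In an unbounded space the hypothesis is vacuous, because `Metric.diam univ = 0`; but the diameter
conditions are vacuous too as long as the pieces involved are unbounded or singletons (their
`Metric.diam` is `0`), so it suffices to split off one point at a time.
-/

open Set Bornology Metric

section Tree

variable {α : Type*} {S₁ S₂ : Set α → Set α} {S₀ : Set α}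

open Classical in
def treeChild (S₁ S₂ : Set α → Set α) (S : Set α) (i : Bool) : Set α :=
  if S.Subsingleton then (if i then S else ∅) else (if i then S₁ S else S₂ S)

def splitTree (S₁ S₂ : Set α → Set α) (S₀ : Set α) (w : List Bool) : Set α :=
  w.foldl (treeChild S₁ S₂) S₀

@[simp]
theorem splitTree_nil : splitTree S₁ S₂ S₀ [] = S₀ := rfl

@[simp]
theorem splitTree_append_singleton (w : List Bool) (i : Bool) :
    splitTree S₁ S₂ S₀ (w ++ [i]) = treeChild S₁ S₂ (splitTree S₁ S₂ S₀ w) i :=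
  List.foldl_concat ..

theorem Set.Nonempty.of_treeChild {S : Set α} {i : Bool} (h : (treeChild S₁ S₂ S i).Nonempty) :
    S.Nonempty := by
  by_cases hS : S.Subsingleton
  · cases i <;> simp_all [treeChild]
  · exact (not_subsingleton_iff.1 hS).nonempty

theorem splitTree_invariant (P : Set α → Prop) (hP₀ : P S₀)
    (hP : ∀ S, P S → ¬S.Subsingleton → P (S₁ S) ∧ P (S₂ S)) (w : List Bool)
    (hw : (splitTree S₁ S₂ S₀ w).Nonempty) : P (splitTree S₁ S₂ S₀ w) := by
  induction w using List.reverseRecOn with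
  | nil => exact hP₀
  | append_singleton w i ih =>
    rw [splitTree_append_singleton] at hw ⊢
    have hPw := ih hw.of_treeChild
    by_cases hS : (splitTree S₁ S₂ S₀ w).Subsingleton
    · cases i <;> simp_all [treeChild]
    · cases i <;> simp [treeChild, hS, hP _ hPw hS]

theorem exists_tree_of_forall_split (P : Set α → Prop) (R : Set α → Set α → Set α → Prop)
    (hS₀ : S₀.Nonempty) (hP₀ : P S₀)
    (hsplit : ∀ S, P S → ¬S.Subsingleton →
      ∃ S₁ S₂, S₁.Nonempty ∧ S₂.Nonempty ∧ P S₁ ∧ P S₂ ∧ R S S₁ S₂) :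
    ∃ (W : Set (List Bool)) (Xf : List Bool → Set α),
      (∀ (w : List Bool) (i : Bool), w ++ [i] ∈ W → w ∈ W) ∧
      [] ∈ W ∧ Xf [] = S₀ ∧
      (∀ w ∈ W, (Xf w).Nonempty) ∧
      (∀ w ∈ W, ¬ (Xf w).Subsingleton →
        w ++ [true] ∈ W ∧ w ++ [false] ∈ W ∧ R (Xf w) (Xf (w ++ [true])) (Xf (w ++ [false]))) ∧
      (∀ w ∈ W, (Xf w).Subsingleton →
        w ++ [true] ∈ W ∧ w ++ [false] ∉ W ∧ Xf (w ++ [true]) = Xf w) := by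
  choose! S₁ S₂ hne₁ hne₂ hP₁ hP₂ hR using hsplit
  have hP : ∀ w, (splitTree S₁ S₂ S₀ w).Nonempty → P (splitTree S₁ S₂ S₀ w) :=
    splitTree_invariant P hP₀ fun S hS hns => ⟨hP₁ S hS hns, hP₂ S hS hns⟩
  refine ⟨{w | (splitTree S₁ S₂ S₀ w).Nonempty}, splitTree S₁ S₂ S₀,
    fun w i hw => ?_, hS₀, rfl, fun w hw => hw, fun w hw hns => ?_, fun w hw hss => ?_⟩
  · rw [mem_ofPred_eq, splitTree_append_singleton] at hw
    exact hw.of_treeChild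
  · simp only [mem_ofPred_eq, splitTree_append_singleton, treeChild, hns, if_false]
    exact ⟨hne₁ _ (hP w hw) hns, hne₂ _ (hP w hw) hns, hR _ (hP w hw) hns⟩
  · simpa [treeChild, hss] using hw

end Tree

def IsUniformlyDisconnected (c : ℝ) (α : Type*) [MetricSpace α] : Prop :=
  ∀ x : α, ∀ r : ℝ, 0 < r → r < diam (univ : Set α) →
    ∃ E : Set α, x ∈ E ∧ diam E ≤ r ∧ ∀ y ∈ E, ∀ z ∈ Eᶜ, r / c ≤ dist y z

section Split

variable {α : Type*} [MetricSpace α]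

def IsSeparatedSplit (c : ℝ) (S S₁ S₂ : Set α) : Prop :=
  S = S₁ ∪ S₂ ∧ Disjoint S₁ S₂ ∧ diam S₁ ≤ (1/2) * diam S ∧
    ∀ x ∈ S₁, ∀ y ∈ S₂, (2 * c)⁻¹ * max (diam S₁) (diam S₂) ≤ dist x y

theorem isSeparatedSplit_inter_sdiff [BoundedSpace α] {c : ℝ} (hc : 0 ≤ c) {S E : Set α}
    (hE : diam E ≤ diam S / 2) (hsep : ∀ y ∈ E, ∀ z ∈ Eᶜ, diam S / 2 / c ≤ dist y z) :
    IsSeparatedSplit c S (S ∩ E) (S \ E) := by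
  refine ⟨(inter_union_sdiff S E).symm, disjoint_sdiff_right.mono_left inter_subset_right,
    ?_, fun x hx y hy => ?_⟩
  · calc diam (S ∩ E) ≤ diam E := diam_mono inter_subset_right (IsBounded.all E)
      _ ≤ (1/2) * diam S := by linarith
  · have hmax : max (diam (S ∩ E)) (diam (S \ E)) ≤ diam S :=
      max_le (diam_mono inter_subset_left (IsBounded.all S))
        (diam_mono sdiff_subset (IsBounded.all S))
    calc (2 * c)⁻¹ * max (diam (S ∩ E)) (diam (S \ E))
        ≤ (2 * c)⁻¹ * diam S := mul_le_mul_of_nonneg_left hmax (by positivity)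
      _ = diam S / 2 / c := by ring
      _ ≤ dist x y := hsep x hx.2 y hy.2

theorem IsUniformlyDisconnected.exists_isSeparatedSplit [BoundedSpace α] {c : ℝ} (hc : 0 ≤ c)
    (hud : IsUniformlyDisconnected c α) {S : Set α} (hS : ¬S.Subsingleton) :
    ∃ S₁ S₂, S₁.Nonempty ∧ S₂.Nonempty ∧ IsSeparatedSplit c S S₁ S₂ := by
  obtain ⟨a, ha⟩ := (not_subsingleton_iff.1 hS).nonempty
  have hpos : 0 < diam S := diam_pos (not_subsingleton_iff.1 hS) (IsBounded.all S)
  have hlt : diam S / 2 < diam (univ : Set α) := by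
    linarith [diam_mono (subset_univ S) (IsBounded.all univ)]
  obtain ⟨E, haE, hE, hsep⟩ := hud a (diam S / 2) (by positivity) hlt
  have hSE : (S \ E).Nonempty := by
    refine sdiff_nonempty.2 fun hSE => ?_
    linarith [diam_mono hSE (IsBounded.all E)]
  exact ⟨S ∩ E, S \ E, ⟨a, ha, haE⟩, hSE, isSeparatedSplit_inter_sdiff hc hE hsep⟩

theorem not_isBounded_sdiff_singleton {S : Set α} (hS : ¬IsBounded S) (y : α) :
    ¬IsBounded (S \ {y}) :=
  fun h => hS ((h.insert y).subset (by simp))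

theorem isSeparatedSplit_sdiff_singleton (c : ℝ) {S : Set α} (hS : ¬IsBounded S) {y : α}
    (hy : y ∈ S) : IsSeparatedSplit c S (S \ {y}) {y} := by
  have hSy := not_isBounded_sdiff_singleton hS y
  refine ⟨(sdiff_union_of_subset (singleton_subset_iff.2 hy)).symm, disjoint_sdiff_left, ?_,
    fun x _ z _ => ?_⟩
  · simp [diam_eq_zero_of_unbounded hS, diam_eq_zero_of_unbounded hSy]
  · simp [diam_eq_zero_of_unbounded hSy, dist_nonneg]

end Split

/-- Words are lists over `Bool`: `w ++ [true]` is the child `w1` and `w ++ [false]` the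
child `w2`. -/
theorem tree_of_uniformlyDisconnected {α : Type*} [MetricSpace α] [Nonempty α]
    (c : ℝ) (hc : 1 ≤ c)
    (hud : ∀ x : α, ∀ r : ℝ, 0 < r → r < Metric.diam (univ : Set α) →
      ∃ E : Set α, x ∈ E ∧ Metric.diam E ≤ r ∧ ∀ y ∈ E, ∀ z ∈ Eᶜ, r / c ≤ dist y z) :
    ∃ (W : Set (List Bool)) (Xf : List Bool → Set α),
      (∀ (w : List Bool) (i : Bool), w ++ [i] ∈ W → w ∈ W) ∧
      [] ∈ W ∧ Xf [] = univ ∧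
      (∀ w ∈ W, (Xf w).Nonempty) ∧
      (∀ w ∈ W, ¬ (Xf w).Subsingleton →
        w ++ [true] ∈ W ∧ w ++ [false] ∈ W ∧
        Xf w = Xf (w ++ [true]) ∪ Xf (w ++ [false]) ∧
        Disjoint (Xf (w ++ [true])) (Xf (w ++ [false])) ∧
        Metric.diam (Xf (w ++ [true])) ≤ (1/2) * Metric.diam (Xf w) ∧
        ∀ x ∈ Xf (w ++ [true]), ∀ y ∈ Xf (w ++ [false]),
          (2 * c)⁻¹ * max (Metric.diam (Xf (w ++ [true])))
              (Metric.diam (Xf (w ++ [false]))) ≤ dist x y) ∧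
      (∀ w ∈ W, (Xf w).Subsingleton →
        w ++ [true] ∈ W ∧ w ++ [false] ∉ W ∧ Xf (w ++ [true]) = Xf w) := by
  by_cases hbdd : BoundedSpace α
  · refine exists_tree_of_forall_split (fun _ => True) (IsSeparatedSplit c) univ_nonempty trivial
      fun S _ hS => ?_
    obtain ⟨S₁, S₂, h₁, h₂, hsplit⟩ :=
      IsUniformlyDisconnected.exists_isSeparatedSplit (by linarith) hud hS
    exact ⟨S₁, S₂, h₁, h₂, trivial, trivial, hsplit⟩
  · refine exists_tree_of_forall_split (fun S => ¬IsBounded S ∨ S.Subsingleton)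
      (IsSeparatedSplit c) univ_nonempty (Or.inl (isBounded_univ.not.2 hbdd)) fun S hP hS => ?_
    have hS' : ¬IsBounded S := hP.resolve_right hS
    obtain ⟨y, hy⟩ := nonempty_of_not_isBounded hS'
    have hSy := not_isBounded_sdiff_singleton hS' y
    exact ⟨S \ {y}, {y}, nonempty_of_not_isBounded hSy, singleton_nonempty y, Or.inl hSy,
      Or.inr subsingleton_singleton, isSeparatedSplit_sdiff_singleton c hS' hy⟩
end
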